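/- Assume condition (6) holds and that c_Λ := inf over words v in F_n^+ of ( W_μ(e,v)^{-1} · liminf_{k→∞} [ W_μ(v, v^{k-1}) ]^{1/k} ) is strictly positive, where v^{k-1} denotes the word v concatenated with itself k−1 times. Then every non-zero element A of 𝔏_Λ has strictly positive spectral radius; in particular the spectrum of A is not equal to {0}. -/

import Mathlib

/-!
The right weighted shifts `R_u : ξ_w ↦ W_μ(w, u) ξ_{wu}` are bounded by condition (6) and commute
with every `T_i`; since commutants are WOT-closed, they commute with every `A ∈ 𝔏_Λ`. Hence
`A ξ_u = W_μ(e, u)⁻¹ R_u (A ξ_e)`: `A` is determined by `a = A ξ_e`, and it raises word length by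
at least `|v|`, where `v` is a shortest word with `a_v ≠ 0`. The coefficient of `A^k ξ_e` at `v^k`
is then `W_μ(e, v) (a_v / W_μ(e, v))^k W_μ(v, v^{k-1})`, and Gelfand's formula turns
`‖A^k‖ ≥ |(A^k ξ_e)(v^k)|` into `r(A) ≥ min(1, W_μ(e, v)) |a_v| c_Λ > 0`.
-/

noncomputable section

/-- Auxiliary recursion for the weight function: `W(u, []) = 1` and, reading the word
`w = i_k ⋯ i_1` as the list `[i_k, …, i_1]`,
`W(u, i :: w) = λ_{i, w·u} · W(u, w)`, so that
`W(u, i_k⋯i_1) = λ_{i_1,u} · λ_{i_2, i_1 u} ⋯ λ_{i_k, i_{k-1}⋯i_1 u}`. -/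
def Waux {n : ℕ} (lam : Fin n → FreeMonoid (Fin n) → ℝ) (u : FreeMonoid (Fin n)) :
    List (Fin n) → ℝ
  | [] => 1
  | i :: w => lam i (FreeMonoid.ofList w * u) * Waux lam u w

/-- The weight function `W : F_n^+ × F_n^+ → ℝ` associated to the weights `λ_{i,w}`. -/
def Wfun {n : ℕ} (lam : Fin n → FreeMonoid (Fin n) → ℝ) (u w : FreeMonoid (Fin n)) : ℝ :=
  Waux lam u (FreeMonoid.toList w)

instance {n : ℕ} : DecidableEq (FreeMonoid (Fin n)) := Classical.decEq _

/-- `n`-variable Fock space `H_n = ℓ²(F_n^+)`. -/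
abbrev Hn (n : ℕ) : Type := lp (fun _ : FreeMonoid (Fin n) => ℂ) 2

/-- The standard orthonormal basis vector `ξ_w` of `H_n`. -/
def xi {n : ℕ} (w : FreeMonoid (Fin n)) : Hn n := lp.single 2 w 1

/-- The unital WOT-closed algebra generated by a tuple of bounded operators on `H_n`:
the closure, in the weak operator topology, of the unital subalgebra they generate. -/
def wotAlg {n : ℕ} (T : Fin n → (Hn n →L[ℂ] Hn n)) : Set (Hn n →L[ℂ] Hn n) :=
  (ContinuousLinearMapWOT.ofCLM :
    (Hn n →L[ℂ] Hn n) → ContinuousLinearMapWOT (RingHom.id ℂ) (Hn n) (Hn n)) ⁻¹'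
    (closure ((ContinuousLinearMapWOT.ofCLM :
    (Hn n →L[ℂ] Hn n) → ContinuousLinearMapWOT (RingHom.id ℂ) (Hn n) (Hn n)) ''
      (Algebra.adjoin ℂ (Set.range T) : Subalgebra ℂ (Hn n →L[ℂ] Hn n))))

/-- Auxiliary recursion for the right weight function: reading `w = i_1 ⋯ i_k` as the
list `[i_1, …, i_k]`, `W_μ(v, i :: w) = μ_{i,v} · W_μ(v·i, w)`, so that
`W_μ(v, i_1⋯i_k) = μ_{i_1,v} · μ_{i_2, v i_1} ⋯ μ_{i_k, v i_1⋯i_{k-1}}`. -/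
def WmuAux {n : ℕ} (mu : Fin n → FreeMonoid (Fin n) → ℝ) :
    FreeMonoid (Fin n) → List (Fin n) → ℝ
  | _, [] => 1
  | v, i :: w => mu i v * WmuAux mu (v * FreeMonoid.of i) w

/-- The right weight function `W_μ : F_n^+ × F_n^+ → ℝ`. -/
def WmuFun {n : ℕ} (mu : Fin n → FreeMonoid (Fin n) → ℝ) (v w : FreeMonoid (Fin n)) : ℝ :=
  WmuAux mu v (FreeMonoid.toList w)

/-- The right weights `μ_{i,w} = W(i,w) · W(e,w)⁻¹` coming from condition (6). -/
def muW {n : ℕ} (lam : Fin n → FreeMonoid (Fin n) → ℝ) :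
    Fin n → FreeMonoid (Fin n) → ℝ :=
  fun i w => Wfun lam (FreeMonoid.of i) w * (Wfun lam 1 w)⁻¹

open Filter Topology Function
open scoped ENNReal

section WeightedShift

variable {ι 𝕜 : Type*} [NormedField 𝕜] {p : ℝ≥0∞} {σ : ι → ι}

lemma norm_extend_zero_rpow (hp : 0 < p.toReal) (g : ι → 𝕜) :
    (fun x => ‖extend σ g 0 x‖ ^ p.toReal) = extend σ (fun i => ‖g i‖ ^ p.toReal) 0 := by
  funext x
  rw [apply_extend (fun a : 𝕜 => ‖a‖ ^ p.toReal)]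
  simp only [comp_def, Pi.zero_apply, norm_zero, Real.zero_rpow hp.ne']
  rfl

lemma Memℓp.extend_zero (hp : 0 < p.toReal) (hσ : Injective σ) {g : ι → 𝕜} (hg : Memℓp g p) :
    Memℓp (extend σ g 0) p := by
  refine memℓp_gen ?_
  rw [norm_extend_zero_rpow hp, summable_extend_zero hσ]
  exact hg.summable hp

lemma Memℓp.mul_of_norm_le {m : ι → 𝕜} {C : ℝ} (hm : ∀ i, ‖m i‖ ≤ C) {f : ι → 𝕜}
    (hf : Memℓp f p) : Memℓp (m * f) p :=
  (hf.norm.const_mul C).mono fun i => by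
    rw [Pi.mul_apply, norm_mul]
    exact mul_le_mul_of_nonneg_right (hm i) (norm_nonneg _)

variable [Fact (1 ≤ p)]

lemma lp.tsum_norm_extend_mul_rpow_le (hp : 0 < p.toReal) (hσ : Injective σ) {m : ι → 𝕜}
    {C : ℝ} (hC : 0 ≤ C) (hm : ∀ i, ‖m i‖ ≤ C) (f : lp (fun _ : ι => 𝕜) p) :
    ∑' x, ‖extend σ (m * ⇑f) 0 x‖ ^ p.toReal ≤ (C * ‖f‖) ^ p.toReal := by
  have hf := (lp.memℓp f).summable hp
  calc ∑' x, ‖extend σ (m * ⇑f) 0 x‖ ^ p.toReal = ∑' i, ‖m i * f i‖ ^ p.toReal := by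
        rw [norm_extend_zero_rpow hp, tsum_extend_zero hσ]; rfl
    _ ≤ ∑' i, C ^ p.toReal * ‖f i‖ ^ p.toReal := by
        refine ((lp.memℓp f).mul_of_norm_le hm |>.summable hp).tsum_le_tsum (fun i => ?_)
          (hf.mul_left _)
        rw [norm_mul, Real.mul_rpow (norm_nonneg _) (norm_nonneg _)]
        gcongr
        exact hm i
    _ = (C * ‖f‖) ^ p.toReal := by
        rw [tsum_mul_left, ← lp.norm_rpow_eq_tsum hp, Real.mul_rpow hC (norm_nonneg _)]

def lp.weightedShift (hp : p ≠ ∞) (hσ : Injective σ) (m : ι → 𝕜) (hm : ∃ C, ∀ i, ‖m i‖ ≤ C) :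
    lp (fun _ : ι => 𝕜) p →L[𝕜] lp (fun _ : ι => 𝕜) p :=
  have hp' : 0 < p.toReal := ENNReal.toReal_pos (zero_lt_one.trans_le Fact.out).ne' hp
  LinearMap.mkContinuousOfExistsBound
    { toFun f := ⟨extend σ (m * ⇑f) 0,
        hm.elim fun _ hC => ((lp.memℓp f).mul_of_norm_le hC).extend_zero hp' hσ⟩
      map_add' f g := by
        ext1
        simp only [lp.coeFn_add]
        rw [mul_add, ← extend_add, add_zero]
      map_smul' c f := by
        ext1
        simp only [lp.coeFn_smul, RingHom.id_apply]
        rw [mul_smul_comm]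
        simpa only [smul_zero] using extend_smul c σ (m * ⇑f) 0 }
    (hm.elim fun C hC => ⟨max C 0, fun f => lp.norm_le_of_tsum_le hp' (by positivity)
      (lp.tsum_norm_extend_mul_rpow_le hp' hσ (le_max_right C 0)
        (fun i => (hC i).trans (le_max_left C 0)) f)⟩)

variable (hp : p ≠ ∞) (hσ : Injective σ) {m : ι → 𝕜} (hm : ∃ C, ∀ i, ‖m i‖ ≤ C)

lemma lp.weightedShift_apply_apply (f : lp (fun _ : ι => 𝕜) p) (i : ι) :
    lp.weightedShift hp hσ m hm f (σ i) = m i * f i :=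
  hσ.extend_apply _ _ i

lemma lp.weightedShift_apply_apply_of_notMem (f : lp (fun _ : ι => 𝕜) p) {x : ι}
    (hx : x ∉ Set.range σ) : lp.weightedShift hp hσ m hm f x = 0 :=
  extend_apply' _ _ x fun ⟨i, hi⟩ => hx ⟨i, hi⟩

lemma lp.weightedShift_single [DecidableEq ι] (i : ι) (c : 𝕜) :
    lp.weightedShift hp hσ m hm (lp.single p i c) = lp.single p (σ i) (m i * c) := by
  ext x
  by_cases hx : x ∈ Set.range σ
  · obtain ⟨j, rfl⟩ := hx
    rw [lp.weightedShift_apply_apply, lp.single_apply, lp.single_apply, Pi.single_apply,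
      Pi.single_apply]
    simp only [hσ.eq_iff]
    split_ifs with h
    · rw [h]
    · rw [mul_zero]
  · rw [lp.weightedShift_apply_apply_of_notMem hp hσ hm _ hx, lp.single_apply,
      Pi.single_apply, if_neg fun h => hx ⟨i, h.symm⟩]

end WeightedShift

section WeakOperatorTopology

variable {𝕜 E : Type*} [NormedField 𝕜] [AddCommGroup E] [TopologicalSpace E] [Module 𝕜 E]
  [IsTopologicalAddGroup E] [ContinuousConstSMul 𝕜 E] [SeparatingDual 𝕜 E]

lemma ContinuousLinearMapWOT.isClosed_setOf_commute (R : E →WOT[𝕜] E) :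
    IsClosed {A : E →WOT[𝕜] E | Commute A R} := by
  refine isClosed_eq (continuous_of_dual_apply_continuous fun x y => ?_)
    (continuous_of_dual_apply_continuous fun x y => ?_)
  · exact continuous_dual_apply (R x) y
  · exact continuous_dual_apply x (y.comp R.toCLM)

lemma ContinuousLinearMap.commute_of_mem_closure_adjoin {S : Set (E →L[𝕜] E)}
    {R : E →L[𝕜] E} (hS : ∀ T ∈ S, Commute T R) {A : E →L[𝕜] E}
    (hA : ContinuousLinearMapWOT.ofCLM A ∈
      closure (ContinuousLinearMapWOT.ofCLM '' (Algebra.adjoin 𝕜 S : Set (E →L[𝕜] E)))) :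
    Commute A R := by
  have hadjoin : Algebra.adjoin 𝕜 S ≤ Subalgebra.centralizer 𝕜 {R} :=
    Algebra.adjoin_le fun T hT => Subalgebra.mem_centralizer_iff 𝕜 |>.2 fun _ hR =>
      hR ▸ (hS T hT).eq.symm
  refine congrArg ContinuousLinearMapWOT.toCLM
    (closure_minimal ?_ (ContinuousLinearMapWOT.isClosed_setOf_commute (.ofCLM R)) hA :)
  rintro _ ⟨B, hB, rfl⟩
  exact congrArg ContinuousLinearMapWOT.ofCLM
    ((Subalgebra.mem_centralizer_iff 𝕜).1 (hadjoin hB) R rfl).symm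

end WeakOperatorTopology

section SpectralRadius

lemma liminf_le_spectralRadius {𝒜 : Type*} [NormedRing 𝒜] [NormedAlgebra ℂ 𝒜] [CompleteSpace 𝒜]
    (a : 𝒜) {F : ℕ → ℝ≥0∞} (hF : ∀ᶠ k in atTop, F k ≤ (‖a ^ k‖₊ : ℝ≥0∞) ^ (1 / k : ℝ)) :
    liminf F atTop ≤ spectralRadius ℂ a :=
  (liminf_le_liminf hF).trans_eq
    (spectrum.pow_nnnorm_pow_one_div_tendsto_nhds_spectralRadius a).liminf_eq

lemma ENNReal.min_one_mul_le_mul_pow_mul_rpow (b x z : ℝ≥0∞) {k : ℕ} (hk : k ≠ 0) :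
    min 1 b * x * z ^ (1 / k : ℝ) ≤ (b * x ^ k * z) ^ (1 / k : ℝ) := by
  have hk' : (0 : ℝ) ≤ 1 / k := by positivity
  rw [ENNReal.mul_rpow_of_nonneg _ _ hk', ENNReal.mul_rpow_of_nonneg _ _ hk', one_div,
    ENNReal.pow_rpow_inv_natCast hk]
  gcongr
  rcases le_total b 1 with hb | hb
  · refine (min_le_right _ _).trans ?_
    simpa using ENNReal.rpow_le_rpow_of_exponent_ge hb
      (inv_le_one_of_one_le₀ (Nat.one_le_cast.2 (Nat.one_le_iff_ne_zero.2 hk)))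
  · exact (min_le_left _ _).trans (ENNReal.one_le_rpow hb (by positivity))

end SpectralRadius

lemma FreeMonoid.length_pow {α : Type*} (v : FreeMonoid α) (k : ℕ) :
    (v ^ k).length = k * v.length := by
  induction k with
  | zero => simp
  | succ k ih => rw [pow_succ, length_mul, ih, Nat.succ_mul]

lemma FreeMonoid.mul_inj_of_length_eq {α : Type*} {w u v y : FreeMonoid α}
    (h : w * u = v * y) (hl : u.length = y.length) : w = v ∧ u = y :=
  List.append_inj' h hl

section Weights

variable {n : ℕ}

lemma WmuAux_append (mu : Fin n → FreeMonoid (Fin n) → ℝ) (l₁ l₂ : List (Fin n))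
    (v : FreeMonoid (Fin n)) :
    WmuAux mu v (l₁ ++ l₂) = WmuAux mu v l₁ * WmuAux mu (v * FreeMonoid.ofList l₁) l₂ := by
  induction l₁ generalizing v with
  | nil => simp [WmuAux]
  | cons i l ih => simp [WmuAux, ih, FreeMonoid.ofList_cons, mul_assoc]

lemma WmuFun_mul (mu : Fin n → FreeMonoid (Fin n) → ℝ) (v u₁ u₂ : FreeMonoid (Fin n)) :
    WmuFun mu v (u₁ * u₂) = WmuFun mu v u₁ * WmuFun mu (v * u₁) u₂ := by
  simpa [WmuFun] using WmuAux_append mu u₁.toList u₂.toList v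

lemma WmuFun_one (mu : Fin n → FreeMonoid (Fin n) → ℝ) (v : FreeMonoid (Fin n)) :
    WmuFun mu v 1 = 1 := rfl

lemma WmuFun_pos {mu : Fin n → FreeMonoid (Fin n) → ℝ} (hmu : ∀ i w, 0 < mu i w)
    (v u : FreeMonoid (Fin n)) : 0 < WmuFun mu v u := by
  unfold WmuFun
  induction u.toList generalizing v with
  | nil => exact one_pos
  | cons i l ih => exact mul_pos (hmu i v) (ih _)

lemma abs_WmuFun_le {mu : Fin n → FreeMonoid (Fin n) → ℝ} {C : ℝ} (hmu : ∀ i w, |mu i w| ≤ C)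
    (v u : FreeMonoid (Fin n)) : |WmuFun mu v u| ≤ C ^ u.length := by
  unfold WmuFun FreeMonoid.length
  induction u.toList generalizing v with
  | nil => simp [WmuAux]
  | cons i l ih =>
    rw [WmuAux, abs_mul, List.length_cons, pow_succ']
    exact mul_le_mul (hmu i v) (ih _) (abs_nonneg _) ((abs_nonneg _).trans (hmu i v))

lemma Wfun_pos {lam : Fin n → FreeMonoid (Fin n) → ℝ} (hlam : ∀ i w, 0 < lam i w)
    (u w : FreeMonoid (Fin n)) : 0 < Wfun lam u w := by
  unfold Wfun
  induction w.toList with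
  | nil => exact one_pos
  | cons i l ih => exact mul_pos (hlam _ _) ih

lemma muW_pos {lam : Fin n → FreeMonoid (Fin n) → ℝ} (hlam : ∀ i w, 0 < lam i w)
    (i : Fin n) (w : FreeMonoid (Fin n)) : 0 < muW lam i w :=
  mul_pos (Wfun_pos hlam _ _) (inv_pos.2 (Wfun_pos hlam _ _))

lemma Wfun_of_mul (lam : Fin n → FreeMonoid (Fin n) → ℝ) (j : Fin n) (u w : FreeMonoid (Fin n)) :
    Wfun lam u (FreeMonoid.of j * w) = lam j (w * u) * Wfun lam u w := rfl

lemma lam_mul_muW_of_mul {lam : Fin n → FreeMonoid (Fin n) → ℝ} (hlam : ∀ i w, 0 < lam i w)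
    (i j : Fin n) (w : FreeMonoid (Fin n)) :
    lam j w * muW lam i (FreeMonoid.of j * w) = lam j (w * FreeMonoid.of i) * muW lam i w := by
  have := (Wfun_pos hlam 1 w).ne'
  have := (hlam j w).ne'
  simp only [muW, Wfun_of_mul, mul_one]
  field_simp

lemma lam_mul_WmuFun_muW {lam : Fin n → FreeMonoid (Fin n) → ℝ} (hlam : ∀ i w, 0 < lam i w)
    (j : Fin n) (w u : FreeMonoid (Fin n)) :
    lam j w * WmuFun (muW lam) (FreeMonoid.of j * w) u =
      WmuFun (muW lam) w u * lam j (w * u) := by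
  rw [← FreeMonoid.ofList_toList u]
  unfold WmuFun
  rw [FreeMonoid.toList_ofList]
  induction u.toList generalizing w with
  | nil => simp [WmuAux]
  | cons i l ih =>
    rw [WmuAux, WmuAux, ← mul_assoc, lam_mul_muW_of_mul hlam, mul_comm (lam j _), mul_assoc,
      mul_assoc (FreeMonoid.of j), ih, FreeMonoid.ofList_cons, ← mul_assoc w, ← mul_assoc]

end Weights

section Fock

variable {n : ℕ}

lemma norm_xi (w : FreeMonoid (Fin n)) : ‖(xi w : Hn n)‖ = 1 := by
  rw [xi, lp.norm_single (by norm_num), norm_one]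

lemma Hn.ext_xi {B B' : Hn n →L[ℂ] Hn n} (h : ∀ w, B (xi w) = B' (xi w)) : B = B' :=
  lp.ext_continuousLinearMap ENNReal.ofNat_ne_top fun w =>
    ContinuousLinearMap.ext_ring (h w)

lemma Hn.apply_eq_tsum (B : Hn n →L[ℂ] Hn n) (f : Hn n) (x : FreeMonoid (Fin n)) :
    B f x = ∑' u, f u * B (xi u) x := by
  have h := ((lp.hasSum_single ENNReal.ofNat_ne_top f).mapL B).mapL (lp.evalCLM ℂ _ 2 x)
  refine (h.tsum_eq.symm.trans (tsum_congr fun u => ?_))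
  have hu : lp.single 2 u (f u) = f u • (xi u : Hn n) := by
    rw [xi, ← lp.single_smul, smul_eq_mul, mul_one]
  change B (lp.single 2 u (f u)) x = _
  rw [hu, map_smul]
  rfl

-- The product of the paper's right weighted shifts `R_i` (weights `μ_{i,w}`) along the word `u`.
def rightShift (mu : Fin n → FreeMonoid (Fin n) → ℝ) (hmu : ∃ C, ∀ i w, |mu i w| ≤ C)
    (u : FreeMonoid (Fin n)) : Hn n →L[ℂ] Hn n :=
  lp.weightedShift ENNReal.ofNat_ne_top (mul_left_injective u) (fun w => (WmuFun mu w u : ℂ))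
    (hmu.elim fun C hC => ⟨C ^ u.length, fun w => by
      rw [Complex.norm_real, Real.norm_eq_abs]
      exact abs_WmuFun_le hC w u⟩)

variable {mu : Fin n → FreeMonoid (Fin n) → ℝ} (hmu : ∃ C, ∀ i w, |mu i w| ≤ C)

lemma rightShift_xi (u w : FreeMonoid (Fin n)) :
    rightShift mu hmu u (xi w) = (WmuFun mu w u : ℂ) • xi (w * u) := by
  rw [rightShift, xi, lp.weightedShift_single, xi, ← lp.single_smul, smul_eq_mul, mul_one]

lemma rightShift_apply_mul (u : FreeMonoid (Fin n)) (f : Hn n) (w : FreeMonoid (Fin n)) :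
    rightShift mu hmu u f (w * u) = WmuFun mu w u * f w :=
  lp.weightedShift_apply_apply _ _ _ f w

lemma rightShift_apply_of_forall_ne {u x : FreeMonoid (Fin n)} (hx : ∀ w, w * u ≠ x)
    (f : Hn n) : rightShift mu hmu u f x = 0 :=
  lp.weightedShift_apply_apply_of_notMem _ _ _ f fun ⟨w, hw⟩ => hx w hw

lemma commute_leftShift_rightShift {lam : Fin n → FreeMonoid (Fin n) → ℝ}
    (hlam : ∀ i w, 0 < lam i w) (hmuW : ∃ C, ∀ i w, |muW lam i w| ≤ C)
    {T : Fin n → (Hn n →L[ℂ] Hn n)}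
    (hT : ∀ i w, T i (xi w) = (lam i w : ℂ) • xi (FreeMonoid.of i * w))
    (j : Fin n) (u : FreeMonoid (Fin n)) : Commute (T j) (rightShift (muW lam) hmuW u) := by
  refine Hn.ext_xi fun w => ?_
  simp only [mul_apply_eq_comp, rightShift_xi, hT, map_smul, smul_smul, mul_assoc]
  congr 1
  exact_mod_cast (lam_mul_WmuFun_muW hlam j w u).symm

end Fock

section Commutant

variable {n : ℕ}

def VanishesBelow (m : ℕ) (f : Hn n) : Prop :=
  ∀ x : FreeMonoid (Fin n), x.length < m → f x = 0

lemma exists_apply_ne_zero_vanishesBelow {f : Hn n} (hf : f ≠ 0) :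
    ∃ v, f v ≠ 0 ∧ VanishesBelow v.length f := by
  obtain ⟨w, hw⟩ : ∃ w, f w ≠ 0 := by
    by_contra! h
    exact hf (lp.ext (funext h))
  obtain ⟨v, hv, hmin⟩ := (measure FreeMonoid.length).wf.has_min {w | f w ≠ 0} ⟨w, hw⟩
  exact ⟨v, hv, fun x hx => by_contra fun h => hmin x h hx⟩

variable {mu : Fin n → FreeMonoid (Fin n) → ℝ} {hmu : ∃ C, ∀ i w, |mu i w| ≤ C}
  {A : Hn n →L[ℂ] Hn n}

lemma apply_xi_eq_rightShift (hpos : ∀ i w, 0 < mu i w)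
    (hA : ∀ u, Commute A (rightShift mu hmu u)) (u : FreeMonoid (Fin n)) :
    A (xi u) = (WmuFun mu 1 u : ℂ)⁻¹ • rightShift mu hmu u (A (xi 1)) := by
  have hne : (WmuFun mu 1 u : ℂ) ≠ 0 := by exact_mod_cast (WmuFun_pos hpos 1 u).ne'
  have hxi : xi u = (WmuFun mu 1 u : ℂ)⁻¹ • rightShift mu hmu u (xi 1) := by
    rw [rightShift_xi, one_mul, smul_smul, inv_mul_cancel₀ hne, one_smul]
  rw [hxi, map_smul, ← mul_apply_eq_comp, (hA u).eq, mul_apply_eq_comp]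

lemma eq_zero_of_apply_xi_one_eq_zero (hpos : ∀ i w, 0 < mu i w)
    (hA : ∀ u, Commute A (rightShift mu hmu u)) (h : A (xi 1) = 0) : A = 0 :=
  Hn.ext_xi fun u => by rw [apply_xi_eq_rightShift hpos hA, h, map_zero, smul_zero,
    zero_apply]

lemma apply_xi_apply_mul (hpos : ∀ i w, 0 < mu i w)
    (hA : ∀ u, Commute A (rightShift mu hmu u)) (u w : FreeMonoid (Fin n)) :
    A (xi u) (w * u) = (WmuFun mu 1 u : ℂ)⁻¹ * WmuFun mu w u * A (xi 1) w := by
  rw [apply_xi_eq_rightShift hpos hA, lp.coeFn_smul, Pi.smul_apply, rightShift_apply_mul,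
    smul_eq_mul, mul_assoc]

lemma apply_xi_apply_of_forall_ne (hpos : ∀ i w, 0 < mu i w)
    (hA : ∀ u, Commute A (rightShift mu hmu u)) {u x : FreeMonoid (Fin n)} (hx : ∀ w, w * u ≠ x) :
    A (xi u) x = 0 := by
  rw [apply_xi_eq_rightShift hpos hA, lp.coeFn_smul, Pi.smul_apply,
    rightShift_apply_of_forall_ne _ hx, smul_zero]

lemma exists_mul_eq_of_mul_apply_xi_ne_zero (hpos : ∀ i w, 0 < mu i w)
    (hA : ∀ u, Commute A (rightShift mu hmu u)) {m d : ℕ} {f : Hn n} (hf : VanishesBelow m f)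
    (ha : VanishesBelow d (A (xi 1))) {u x : FreeMonoid (Fin n)} (h : f u * A (xi u) x ≠ 0) :
    ∃ w, w * u = x ∧ d ≤ w.length ∧ m ≤ u.length := by
  obtain ⟨hfu, hAu⟩ := mul_ne_zero_iff.1 h
  by_cases hx : ∃ w, w * u = x
  · obtain ⟨w, rfl⟩ := hx
    refine ⟨w, rfl, le_of_not_gt fun hw => hAu ?_, le_of_not_gt fun hu => hfu (hf u hu)⟩
    rw [apply_xi_apply_mul hpos hA, ha w hw, mul_zero]
  · exact absurd (apply_xi_apply_of_forall_ne hpos hA (not_exists.1 hx)) hAu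

lemma VanishesBelow.apply (hpos : ∀ i w, 0 < mu i w) (hA : ∀ u, Commute A (rightShift mu hmu u))
    {m d : ℕ} {f : Hn n} (hf : VanishesBelow m f) (ha : VanishesBelow d (A (xi 1))) :
    VanishesBelow (m + d) (A f) := by
  intro x hx
  rw [Hn.apply_eq_tsum]
  refine (tsum_congr fun u => ?_).trans tsum_zero
  by_contra h
  obtain ⟨w, rfl, hw, hu⟩ := exists_mul_eq_of_mul_apply_xi_ne_zero hpos hA hf ha h
  rw [FreeMonoid.length_mul] at hx
  omega

lemma apply_apply_mul_of_vanishesBelow (hpos : ∀ i w, 0 < mu i w)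
    (hA : ∀ u, Commute A (rightShift mu hmu u)) {f : Hn n} {v y : FreeMonoid (Fin n)}
    (hf : VanishesBelow y.length f) (ha : VanishesBelow v.length (A (xi 1))) :
    A f (v * y) = (WmuFun mu 1 y : ℂ)⁻¹ * WmuFun mu v y * A (xi 1) v * f y := by
  rw [Hn.apply_eq_tsum, tsum_eq_single y, apply_xi_apply_mul hpos hA, mul_comm]
  intro u hu
  by_contra h
  obtain ⟨w, hw, hwl, hul⟩ := exists_mul_eq_of_mul_apply_xi_ne_zero hpos hA hf ha h
  have hlen := congrArg FreeMonoid.length hw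
  rw [FreeMonoid.length_mul, FreeMonoid.length_mul] at hlen
  exact hu (FreeMonoid.mul_inj_of_length_eq hw (by omega)).2

lemma vanishesBelow_pow_apply_xi_one (hpos : ∀ i w, 0 < mu i w)
    (hA : ∀ u, Commute A (rightShift mu hmu u)) {d : ℕ} (ha : VanishesBelow d (A (xi 1)))
    (k : ℕ) : VanishesBelow (k * d) ((A ^ k) (xi 1)) := by
  induction k with
  | zero => simp [VanishesBelow]
  | succ k ih =>
    rw [pow_succ', mul_apply_eq_comp, Nat.succ_mul]
    exact ih.apply hpos hA ha

lemma pow_apply_xi_one_pow (hpos : ∀ i w, 0 < mu i w)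
    (hA : ∀ u, Commute A (rightShift mu hmu u)) {v : FreeMonoid (Fin n)}
    (ha : VanishesBelow v.length (A (xi 1))) (k : ℕ) :
    (A ^ (k + 1)) (xi 1) (v ^ (k + 1)) =
      WmuFun mu 1 v * (A (xi 1) v / WmuFun mu 1 v) ^ (k + 1) * WmuFun mu v (v ^ k) := by
  have hβ : (WmuFun mu 1 v : ℂ) ≠ 0 := by exact_mod_cast (WmuFun_pos hpos 1 v).ne'
  induction k with
  | zero => simp [mul_div_cancel₀ _ hβ, WmuFun_one]
  | succ k ih =>
    have hf : VanishesBelow (v ^ (k + 1)).length ((A ^ (k + 1)) (xi 1)) := by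
      rw [FreeMonoid.length_pow]
      exact vanishesBelow_pow_apply_xi_one hpos hA ha (k + 1)
    have hγ : (WmuFun mu v (v ^ k) : ℂ) ≠ 0 := by exact_mod_cast (WmuFun_pos hpos v _).ne'
    rw [pow_succ' A, mul_apply_eq_comp, pow_succ' v,
      apply_apply_mul_of_vanishesBelow hpos hA hf ha, ih, pow_succ' v, WmuFun_mul, one_mul]
    push_cast
    rw [div_pow, div_pow]
    field_simp
    ring

lemma norm_pow_apply_xi_one_pow (hpos : ∀ i w, 0 < mu i w)
    (hA : ∀ u, Commute A (rightShift mu hmu u)) {v : FreeMonoid (Fin n)}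
    (ha : VanishesBelow v.length (A (xi 1))) (k : ℕ) :
    ‖(A ^ (k + 1)) (xi 1) (v ^ (k + 1))‖ =
      WmuFun mu 1 v * (‖A (xi 1) v‖ / WmuFun mu 1 v) ^ (k + 1) * WmuFun mu v (v ^ k) := by
  rw [pow_apply_xi_one_pow hpos hA ha, norm_mul, norm_mul, norm_pow, norm_div, Complex.norm_real,
    Complex.norm_real, Real.norm_of_nonneg (WmuFun_pos hpos _ _).le,
    Real.norm_of_nonneg (WmuFun_pos hpos _ _).le]

lemma le_spectralRadius_of_vanishesBelow (hpos : ∀ i w, 0 < mu i w)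
    (hA : ∀ u, Commute A (rightShift mu hmu u)) {v : FreeMonoid (Fin n)}
    (ha : VanishesBelow v.length (A (xi 1))) :
    min 1 (ENNReal.ofReal (WmuFun mu 1 v)) * ENNReal.ofReal ‖A (xi 1) v‖ *
      ((ENNReal.ofReal (WmuFun mu 1 v))⁻¹ *
        liminf (fun k : ℕ => ENNReal.ofReal (WmuFun mu v (v ^ (k - 1))) ^ ((1 : ℝ) / k)) atTop)
      ≤ spectralRadius ℂ A := by
  set β := WmuFun mu 1 v
  have hβ : 0 < β := WmuFun_pos hpos 1 v
  rw [← ENNReal.liminf_const_mul_of_ne_top (ENNReal.inv_ne_top.2 (ENNReal.ofReal_pos.2 hβ).ne'),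
    ← ENNReal.liminf_const_mul_of_ne_top
      (ENNReal.mul_ne_top (by simp) ENNReal.ofReal_ne_top)]
  refine liminf_le_spectralRadius A ?_
  filter_upwards [eventually_ne_atTop 0] with k hk
  obtain ⟨j, rfl⟩ : ∃ j, k = j + 1 := ⟨k - 1, by omega⟩
  have hcoef : ‖(A ^ (j + 1)) (xi 1) (v ^ (j + 1))‖ ≤ ‖A ^ (j + 1)‖ :=
    (lp.norm_apply_le_norm (by norm_num) _ _).trans
      (((A ^ (j + 1)).le_opNorm _).trans_eq (by rw [norm_xi, mul_one]))
  rw [norm_pow_apply_xi_one_pow hpos hA ha] at hcoef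
  calc _ = min 1 (ENNReal.ofReal β) * (ENNReal.ofReal ‖A (xi 1) v‖ / ENNReal.ofReal β) *
        ENNReal.ofReal (WmuFun mu v (v ^ j)) ^ (1 / (j + 1 : ℕ) : ℝ) := by
        rw [Nat.add_sub_cancel, ENNReal.div_eq_inv_mul]; ring
    _ ≤ (ENNReal.ofReal β * (ENNReal.ofReal ‖A (xi 1) v‖ / ENNReal.ofReal β) ^ (j + 1) *
        ENNReal.ofReal (WmuFun mu v (v ^ j))) ^ (1 / (j + 1 : ℕ) : ℝ) :=
      ENNReal.min_one_mul_le_mul_pow_mul_rpow _ _ _ hk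
    _ ≤ _ := by
      gcongr
      rw [← ENNReal.ofReal_div_of_pos hβ, ← ENNReal.ofReal_pow (by positivity),
        ← ENNReal.ofReal_mul hβ.le, ← ENNReal.ofReal_mul (by positivity)]
      exact (ENNReal.ofReal_le_ofReal hcoef).trans_eq (ofReal_norm _)

end Commutant

theorem LLambda_positive_spectral_radius_general (n : ℕ)
    (lam : Fin n → FreeMonoid (Fin n) → ℝ)
    (hpos : ∀ i w, 0 < lam i w)
    (h6 : ∃ C : ℝ, ∀ i w, Wfun lam (FreeMonoid.of i) w * (Wfun lam 1 w)⁻¹ ≤ C)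
    (hc : 0 < ⨅ v : FreeMonoid (Fin n),
      (ENNReal.ofReal (WmuFun (muW lam) 1 v))⁻¹ *
        Filter.liminf
          (fun k : ℕ => ENNReal.ofReal (WmuFun (muW lam) v (v ^ (k - 1))) ^ ((1 : ℝ) / k))
          Filter.atTop)
    (T : Fin n → (Hn n →L[ℂ] Hn n))
    (hT : ∀ i w, T i (xi w) = (lam i w : ℂ) • xi (FreeMonoid.of i * w))
    (A : Hn n →L[ℂ] Hn n) (hA : A ∈ wotAlg T) (hA0 : A ≠ 0) :
    0 < spectralRadius ℂ A ∧ spectrum ℂ A ≠ {0} := by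
  have hμpos := muW_pos hpos
  have hμ : ∃ C, ∀ i w, |muW lam i w| ≤ C :=
    h6.imp fun C hC i w => (abs_of_pos (hμpos i w)).trans_le (hC i w)
  have hcomm (u : FreeMonoid (Fin n)) : Commute A (rightShift (muW lam) hμ u) :=
    ContinuousLinearMap.commute_of_mem_closure_adjoin
      (by rintro _ ⟨j, rfl⟩; exact commute_leftShift_rightShift hpos hμ hT j u) hA
  obtain ⟨v, hav, hmin⟩ := exists_apply_ne_zero_vanishesBelow
    fun h => hA0 (eq_zero_of_apply_xi_one_eq_zero hμpos hcomm h)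
  have hβ : 0 < ENNReal.ofReal (WmuFun (muW lam) 1 v) :=
    ENNReal.ofReal_pos.2 (WmuFun_pos hμpos 1 v)
  have hα : 0 < ENNReal.ofReal ‖A (xi 1) v‖ := ENNReal.ofReal_pos.2 (norm_pos_iff.2 hav)
  have hρ : 0 < spectralRadius ℂ A :=
    (ENNReal.mul_pos (ENNReal.mul_pos (lt_min one_pos hβ).ne' hα.ne').ne'
      (hc.trans_le (iInf_le _ v)).ne').trans_le
      (le_spectralRadius_of_vanishesBelow hμpos hcomm hmin)
  exact ⟨hρ, fun h => hρ.ne' (by simp [spectralRadius, h])⟩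

/-- Assume condition (6) holds and that
`c_Λ = inf_v ( W_μ(e,v)⁻¹ · liminf_k [W_μ(v, v^{k-1})]^{1/k} )` is strictly positive.
Then every non-zero `A ∈ 𝔏_Λ` has strictly positive spectral radius; in particular
the spectrum of `A` is not `{0}`. -/
theorem LLambda_positive_spectral_radius (n : ℕ) (hn : 2 ≤ n)
    (lam : Fin n → FreeMonoid (Fin n) → ℝ)
    (hpos : ∀ i w, 0 < lam i w) (hbdd : ∃ C : ℝ, ∀ i w, lam i w ≤ C)
    (h6 : ∃ C : ℝ, ∀ i w, Wfun lam (FreeMonoid.of i) w * (Wfun lam 1 w)⁻¹ ≤ C)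
    (hc : 0 < ⨅ v : FreeMonoid (Fin n),
      (ENNReal.ofReal (WmuFun (muW lam) 1 v))⁻¹ *
        Filter.liminf
          (fun k : ℕ => ENNReal.ofReal (WmuFun (muW lam) v (v ^ (k - 1))) ^ ((1 : ℝ) / k))
          Filter.atTop)
    (T : Fin n → (Hn n →L[ℂ] Hn n))
    (hT : ∀ i w, T i (xi w) = (lam i w : ℂ) • xi (FreeMonoid.of i * w))
    (A : Hn n →L[ℂ] Hn n) (hA : A ∈ wotAlg T) (hA0 : A ≠ 0) :
    0 < spectralRadius ℂ A ∧ spectrum ℂ A ≠ {0} :=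
  LLambda_positive_spectral_radius_general n lam hpos h6 hc T hT A hA hA0
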